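/- arXiv:1202.1166 — 11 statements merged into one kernel-verified Lean document; each statement's English description precedes it below -/
import Mathlib

section
/- Let s ≥ 1, K ≥ 1, let h be a real number, let Ã = (ã_{ij}) and A = (a_{ij}) be real s×s matrices and ω̃ = (ω̃_i), ω = (ω_i) real vectors with ω̃_i ≠ 0 and ω_i ≠ 0 for all i. Let F_1,…,F_s and G_1,…,G_s be real K×K matrices (representing the transposed Jacobians f_y(Y^{(i)},u^i)^T and g_y(Y^{(i)},u^i)^T), and let p_{n+1}, ζ^{(1)},…,ζ^{(s)} be vectors in ℝ^K satisfying ζ^{(i)} = h ω̃_i F_i p_{n+1} + h ω_i G_i p_{n+1} + h Σ_{j=1}^s ã_{ji} F_i ζ^{(j)} + h Σ_{j=1}^s a_{ji} G_i ζ^{(j)} for i = 1,…,s (the non-standard adjoint system (ARK-HS)), and set p_n = p_{n+1} + Σ_{i=1}^s ζ^{(i)}. Define P̃^{(i)} := p_{n+1} + Σ_{j=1}^s (ã_{ji}/ω̃_i) ζ^{(j)} and P^{(i)} := p_{n+1} + Σ_{j=1}^s (a_{ji}/ω_i) ζ^{(j)}. Then ζ^{(j)} = h ω̃_j F_j P̃^{(j)}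 + h ω_j G_j P^{(j)} for all j, the transformed variables satisfy P̃^{(i)} = p_{n+1} + h Σ_{j=1}^s (ω̃_j ã_{ji}/ω̃_i) F_j P̃^{(j)} + h Σ_{j=1}^s (ω_j ã_{ji}/ω̃_i) G_j P^{(j)} and P^{(i)} = p_{n+1} + h Σ_{j=1}^s (ω̃_j a_{ji}/ω_i) F_j P̃^{(j)} + h Σ_{j=1}^s (ω_j a_{ji}/ω_i) G_j P^{(j)} for i = 1,…,s, and p_n = p_{n+1} + h Σ_{i=1}^s ω̃_i F_i P̃^{(i)} + h Σ_{i=1}^s ω_i G_i P^{(i)}; i.e., the new variables obey a standard (backward) Runge–Kutta scheme with coefficients α̌_{ij} = (ω̃_j/ω̃_i) ã_{ji}, α̂_{ij} = (ω_j/ω̃_i) ã_{ji}, β̌_{ij} = (ω̃_j/ω_i) a_{ji}, β̂_{ij} = (ω_j/ω_i) a_{ji}. -/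
open Matrix BigOperators Finset

private lemma mulVec_sum' {K s : ℕ} (M : Matrix (Fin K) (Fin K) ℝ) (v : Fin s → Fin K → ℝ) :
    M.mulVec (∑ j, v j) = ∑ j, M.mulVec (v j) := by
  exact map_sum M.mulVecLin v Finset.univ

/-- Variable-transformation step in the proof of Lemma 2.1: the non-standard adjoint
system (ARK-HS) for `ζ⁽ⁱ⁾` is turned, via `P̃⁽ⁱ⁾ = p_{n+1} + Σ_j (ã_{ji}/ω̃_i) ζ⁽ʲ⁾` and
`P⁽ⁱ⁾ = p_{n+1} + Σ_j (a_{ji}/ω_i) ζ⁽ʲ⁾`, into a standard (backward) Runge–Kutta scheme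
with coefficients `α̌_{ij} = (ω̃_j/ω̃_i) ã_{ji}`, `α̂_{ij} = (ω_j/ω̃_i) ã_{ji}`,
`β̌_{ij} = (ω̃_j/ω_i) a_{ji}`, `β̂_{ij} = (ω_j/ω_i) a_{ji}`. -/
theorem imex_adjoint_stagevalue_transformation
    (s K : ℕ) (hs : 1 ≤ s) (hK : 1 ≤ K) (h : ℝ)
    (At A : Matrix (Fin s) (Fin s) ℝ) (wt w : Fin s → ℝ)
    (hwt : ∀ i, wt i ≠ 0) (hw : ∀ i, w i ≠ 0)
    (F G : Fin s → Matrix (Fin K) (Fin K) ℝ)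
    (pn pn1 : Fin K → ℝ) (zeta : Fin s → Fin K → ℝ)
    (hzeta : ∀ i, zeta i = (h * wt i) • (F i).mulVec pn1
      + (h * w i) • (G i).mulVec pn1
      + ∑ j, (h * At j i) • (F i).mulVec (zeta j)
      + ∑ j, (h * A j i) • (G i).mulVec (zeta j))
    (hpn : pn = pn1 + ∑ i, zeta i)
    (Pt P : Fin s → Fin K → ℝ)
    (hPt : ∀ i, Pt i = pn1 + ∑ j, (At j i / wt i) • zeta j)
    (hP : ∀ i, P i = pn1 + ∑ j, (A j i / w i) • zeta j) :
    (∀ j, zeta j = (h * wt j) • (F j).mulVec (Pt j) + (h * w j) • (G j).mulVec (P j))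
    ∧ (∀ i, Pt i = pn1
        + ∑ j, (h * (wt j * At j i / wt i)) • (F j).mulVec (Pt j)
        + ∑ j, (h * (w j * At j i / wt i)) • (G j).mulVec (P j))
    ∧ (∀ i, P i = pn1
        + ∑ j, (h * (wt j * A j i / w i)) • (F j).mulVec (Pt j)
        + ∑ j, (h * (w j * A j i / w i)) • (G j).mulVec (P j))
    ∧ pn = pn1 + h • ∑ i, wt i • (F i).mulVec (Pt i)
              + h • ∑ i, w i • (G i).mulVec (P i) := by
  have key : ∀ j, zeta j = (h * wt j) • (F j).mulVec (Pt j) + (h * w j) • (G j).mulVec (P j) := by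
    intro j
    rw [hPt j, hP j, mulVec_add, mulVec_add, mulVec_sum', mulVec_sum']
    rw [hzeta j]
    simp only [smul_add, Finset.smul_sum, mulVec_smul, smul_smul]
    have e1 : ∀ i : Fin s, h * wt j * (At i j / wt j) = h * At i j := by
      intro i
      rw [mul_div_assoc', mul_right_comm, mul_div_assoc, div_self (hwt j), mul_one]
    have e2 : ∀ i : Fin s, h * w j * (A i j / w j) = h * A i j := by
      intro i
      rw [mul_div_assoc', mul_right_comm, mul_div_assoc, div_self (hw j), mul_one]
    simp only [e1, e2]
    abel
  refine ⟨key, ?_, ?_, ?_⟩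
  · intro i
    rw [hPt i]
    have : ∀ j : Fin s, (At j i / wt i) • zeta j
        = (h * (wt j * At j i / wt i)) • (F j).mulVec (Pt j)
        + (h * (w j * At j i / wt i)) • (G j).mulVec (P j) := by
      intro j
      rw [key j, smul_add, smul_smul, smul_smul]
      congr 1 <;> ring_nf
    simp only [this, Finset.sum_add_distrib]
    abel
  · intro i
    rw [hP i]
    have : ∀ j : Fin s, (A j i / w i) • zeta j
        = (h * (wt j * A j i / w i)) • (F j).mulVec (Pt j)
        + (h * (w j * A j i / w i)) • (G j).mulVec (P j) := by
      intro j
      rw [key j, smul_add, smul_smul, smul_smul]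
      congr 1 <;> ring_nf
    simp only [this, Finset.sum_add_distrib]
    abel
  · rw [hpn]
    have : ∀ i : Fin s, zeta i = (h • (wt i • (F i).mulVec (Pt i)))
        + (h • (w i • (G i).mulVec (P i))) := by
      intro i; rw [key i, smul_smul, smul_smul]
    simp only [this, Finset.sum_add_distrib, smul_sum]
    abel
end

section
/- Let s ≥ 1, K ≥ 1, let h be a real number, let Ã = (ã_{ij}) and A = (a_{ij}) be real s×s matrices and ω̃ = (ω̃_i), ω = (ω_i) real vectors. Let F_1,…,F_s and G_1,…,G_s be real K×K matrices and let p_{n+1}, ξ̃^{(1)},…,ξ̃^{(s)}, ξ^{(1)},…,ξ^{(s)} be vectors in ℝ^K satisfying the adjoint system (ARK-1): ξ̃^{(i)} = h ω̃_i p_{n+1} + h Σ_{j=1}^s ã_{ji} F_j ξ̃^{(j)} + h Σ_{j=1}^s ã_{ji} G_j ξ^{(j)} and ξ^{(i)} = h ω_i p_{n+1} + h Σ_{j=1}^s a_{ji} F_j ξ̃^{(j)} + h Σ_{j=1}^s a_{ji} G_j ξ^{(j)} for i = 1,…,s. Define ζ^{(i)} := F_i ξ̃^{(i)} + G_i ξ^{(i)}.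 Then (1) ζ satisfies the adjoint system (ARK-HS): ζ^{(i)} = h ω̃_i F_i p_{n+1} + h ω_i G_i p_{n+1} + h Σ_{j=1}^s ã_{ji} F_i ζ^{(j)} + h Σ_{j=1}^s a_{ji} G_i ζ^{(j)} for all i; (2) the two updates for the adjoint state coincide: p_{n+1} + Σ_{i=1}^s F_i ξ̃^{(i)} + Σ_{i=1}^s G_i ξ^{(i)} = p_{n+1} + Σ_{i=1}^s ζ^{(i)}; and (3) if additionally h ≠ 0 and ω̃_i ≠ 0, ω_i ≠ 0 for all i, the two variable transformations coincide: ξ̃^{(i)}/(h ω̃_i) = p_{n+1} + Σ_{j=1}^s (ã_{ji}/ω̃_i) ζ^{(j)} and ξ^{(i)}/(h ω_i) = p_{n+1} + Σ_{j=1}^s (a_{ji}/ω_i) ζ^{(j)} for all i. -/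
open Matrix BigOperators Finset

/-- Commutativity of the two routes to the discrete adjoint scheme (Theorem 2.1 / Figure 1):
given the adjoint system (ARK-1) for `ξ̃⁽ⁱ⁾, ξ⁽ⁱ⁾` and `ζ⁽ⁱ⁾ := F_i ξ̃⁽ⁱ⁾ + G_i ξ⁽ⁱ⁾`,
(1) `ζ` satisfies (ARK-HS), (2) both updates for the adjoint state coincide, and
(3) when `h ≠ 0` and the weights are nonzero the two variable transformations coincide. -/
theorem imex_adjoint_routes_commute
    (s K : ℕ) (hs : 1 ≤ s) (hK : 1 ≤ K) (h : ℝ)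
    (At A : Matrix (Fin s) (Fin s) ℝ) (wt w : Fin s → ℝ)
    (F G : Fin s → Matrix (Fin K) (Fin K) ℝ)
    (pn1 : Fin K → ℝ) (xit xi : Fin s → Fin K → ℝ)
    (hxit : ∀ i, xit i = (h * wt i) • pn1
      + ∑ j, (h * At j i) • (F j).mulVec (xit j)
      + ∑ j, (h * At j i) • (G j).mulVec (xi j))
    (hxi : ∀ i, xi i = (h * w i) • pn1
      + ∑ j, (h * A j i) • (F j).mulVec (xit j)
      + ∑ j, (h * A j i) • (G j).mulVec (xi j))
    (zeta : Fin s → Fin K → ℝ)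
    (hzeta : ∀ i, zeta i = (F i).mulVec (xit i) + (G i).mulVec (xi i)) :
    (∀ i, zeta i = (h * wt i) • (F i).mulVec pn1
      + (h * w i) • (G i).mulVec pn1
      + ∑ j, (h * At j i) • (F i).mulVec (zeta j)
      + ∑ j, (h * A j i) • (G i).mulVec (zeta j))
    ∧ (pn1 + ∑ i, (F i).mulVec (xit i) + ∑ i, (G i).mulVec (xi i)
        = pn1 + ∑ i, zeta i)
    ∧ (h ≠ 0 → (∀ i, wt i ≠ 0) → (∀ i, w i ≠ 0) →
        ∀ i, (h * wt i)⁻¹ • xit i = pn1 + ∑ j, (At j i / wt i) • zeta j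
          ∧ (h * w i)⁻¹ • xi i = pn1 + ∑ j, (A j i / w i) • zeta j) := by

  have key : ∀ (M : Matrix (Fin s) (Fin s) ℝ) (v : Fin s → ℝ) (i : Fin s),
      (h * v i) • pn1 + ∑ j, (h * M j i) • (F j).mulVec (xit j)
        + ∑ j, (h * M j i) • (G j).mulVec (xi j)
      = (h * v i) • pn1 + ∑ j, (h * M j i) • zeta j := by
    intro M v i
    rw [add_assoc, ← Finset.sum_add_distrib]
    congr 1
    refine Finset.sum_congr rfl fun j _ => ?_
    rw [hzeta j, smul_add]
  have hxit' : ∀ i, xit i = (h * wt i) • pn1 + ∑ j, (h * At j i) • zeta j := by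
    intro i; rw [hxit i, key]
  have hxi' : ∀ i, xi i = (h * w i) • pn1 + ∑ j, (h * A j i) • zeta j := by
    intro i; rw [hxi i, key]
  have mv_sum : ∀ (M : Matrix (Fin K) (Fin K) ℝ) (f : Fin s → Fin K → ℝ),
      M.mulVec (∑ j, f j) = ∑ j, M.mulVec (f j) := by
    intro M f
    simp only [← Matrix.mulVecLin_apply]
    exact map_sum M.mulVecLin f Finset.univ
  refine ⟨?_, ?_, ?_⟩
  · intro i
    rw [hzeta i, hxit' i, hxi' i]
    simp only [Matrix.mulVec_add, Matrix.mulVec_smul, mv_sum]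
    abel
  · rw [add_assoc, ← Finset.sum_add_distrib]
    congr 1
    refine Finset.sum_congr rfl fun i _ => ?_
    rw [hzeta i]
  · intro hh hwt hw i
    have hwt' : h * wt i ≠ 0 := mul_ne_zero hh (hwt i)
    have hw' : h * w i ≠ 0 := mul_ne_zero hh (hw i)
    constructor
    · rw [hxit' i, smul_add, inv_smul_smul₀ hwt', Finset.smul_sum]
      congr 1
      refine Finset.sum_congr rfl fun j _ => ?_
      rw [smul_smul]
      congr 1
      rw [mul_inv, div_eq_mul_inv, show h⁻¹ * (wt i)⁻¹ * (h * At j i)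
        = (h⁻¹ * h) * (At j i * (wt i)⁻¹) from by ring, inv_mul_cancel₀ hh, one_mul]
    · rw [hxi' i, smul_add, inv_smul_smul₀ hw', Finset.smul_sum]
      congr 1
      refine Finset.sum_congr rfl fun j _ => ?_
      rw [smul_smul]
      congr 1
      rw [mul_inv, div_eq_mul_inv, show h⁻¹ * (w i)⁻¹ * (h * A j i)
        = (h⁻¹ * h) * (A j i * (w i)⁻¹) from by ring, inv_mul_cancel₀ hh, one_mul]
end

section
/- Let h be a nonzero real number, let s, K, m ≥ 1, let N be a real (sK)×(sK) matrix, C a real (sK)×K matrix, ζ ∈ ℝ^{sK} and p ∈ ℝ^K with N ζ = h C p. Let F_u and G_u be real K×m matrices, D̃ and D real K×(sK) matrices, and W a real m×(sK) matrix with W N = h F_u^T D̃ + h G_u^T D. Let ω̃ and ω be nonzero real numbers and P̃, P ∈ ℝ^K with ω̃ P̃ = ω̃ p + D̃ ζ and ω P = ω p + D ζ. Then W C p + ω̃ F_u^T p + ω G_u^T p = ω̃ F_u^T P̃ + ω G_u^T P. -/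
open Matrix BigOperators Finset

/-- The linear-algebraic identity underlying Lemma 2.3: the gradient of the discrete
Hamiltonian, `W C p + ω̃ F_uᵀ p + ω G_uᵀ p`, equals `ω̃ F_uᵀ P̃ + ω G_uᵀ P`. -/
theorem discrete_hamiltonian_gradient
    (s K m : ℕ) (hs : 1 ≤ s) (hK : 1 ≤ K) (hm : 1 ≤ m) (h : ℝ) (hh : h ≠ 0)
    (N : Matrix (Fin (s * K)) (Fin (s * K)) ℝ)
    (C : Matrix (Fin (s * K)) (Fin K) ℝ)
    (zeta : Fin (s * K) → ℝ) (p : Fin K → ℝ)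
    (hNzeta : N.mulVec zeta = h • C.mulVec p)
    (Fu Gu : Matrix (Fin K) (Fin m) ℝ)
    (Dt D : Matrix (Fin K) (Fin (s * K)) ℝ)
    (W : Matrix (Fin m) (Fin (s * K)) ℝ)
    (hWN : W * N = h • (Fuᵀ * Dt) + h • (Guᵀ * D))
    (wt w : ℝ) (hwt : wt ≠ 0) (hw : w ≠ 0)
    (Pt P : Fin K → ℝ)
    (hPt : wt • Pt = wt • p + Dt.mulVec zeta)
    (hP : w • P = w • p + D.mulVec zeta) :
    W.mulVec (C.mulVec p) + wt • Fuᵀ.mulVec p + w • Guᵀ.mulVec p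
      = wt • Fuᵀ.mulVec Pt + w • Guᵀ.mulVec P := by
  have key : W.mulVec (C.mulVec p)
      = (Fuᵀ * Dt).mulVec zeta + (Guᵀ * D).mulVec zeta := by
    apply smul_right_injective (Fin m → ℝ) hh
    have h1 : (W * N).mulVec zeta = h • W.mulVec (C.mulVec p) := by
      rw [← Matrix.mulVec_mulVec, hNzeta, Matrix.mulVec_smul]
    rw [hWN] at h1
    show h • W.mulVec (C.mulVec p) = h • ((Fuᵀ * Dt).mulVec zeta + (Guᵀ * D).mulVec zeta)
    rw [← h1, Matrix.add_mulVec, smul_add, Matrix.smul_mulVec,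
      Matrix.smul_mulVec]
  have e1 : wt • Fuᵀ.mulVec Pt = wt • Fuᵀ.mulVec p + (Fuᵀ * Dt).mulVec zeta := by
    rw [← Matrix.mulVec_smul, hPt, Matrix.mulVec_add, Matrix.mulVec_smul,
      Matrix.mulVec_mulVec]
  have e2 : w • Guᵀ.mulVec P = w • Guᵀ.mulVec p + (Guᵀ * D).mulVec zeta := by
    rw [← Matrix.mulVec_smul, hP, Matrix.mulVec_add, Matrix.mulVec_smul,
      Matrix.mulVec_mulVec]
  rw [key, e1, e2]
  abel
end

section
/- Let s ≥ 1, let Ã = (ã_{ij}) and A = (a_{ij}) be real s×s matrices and ω̃ = (ω̃_i), ω = (ω_i) real vectors with ω̃_i ≠ 0 and ω_i ≠ 0 for all i. Assume the second-order conditions of the IMEX scheme: Σ_i ω̃_i = 1, Σ_i ω_i = 1, Σ_j ω̃_j c̃_j = 1/2, Σ_j ω̃_j c_j = 1/2, Σ_j ω_j c̃_j = 1/2 and Σ_j ω_j c_j = 1/2. Then the adjoint coefficients satisfy Σ_i ω̃_i γ_i = 1/2, Σ_i ω̃_i γ̃_i = 1/2, Σ_i ω_i δ_i = 1/2 and Σ_i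 ω_i δ̃_i = 1/2. -/
open Matrix BigOperators Finset

lemma aux_adjoint (s : ℕ) (M : Matrix (Fin s) (Fin s) ℝ) (u v : Fin s → ℝ)
    (hu : ∀ i, u i ≠ 0) (h1 : ∑ i, u i = 1) (h2 : ∑ i, v i = 1)
    (h3 : ∑ j, v j * (∑ k, M j k) = 1 / 2) :
    ∑ i, u i * (∑ j, (v j - v j / u i * M j i)) = 1 / 2 := by
  have key : ∀ i, u i * (∑ j, (v j - v j / u i * M j i))
      = u i * (∑ j, v j) - ∑ j, v j * M j i := by
    intro i
    rw [Finset.sum_sub_distrib, mul_sub]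
    congr 1
    rw [Finset.mul_sum]
    refine Finset.sum_congr rfl fun j _ => ?_
    rw [mul_comm, mul_right_comm, div_mul_cancel₀ _ (hu i)]
  simp only [key]
  rw [Finset.sum_sub_distrib, ← Finset.sum_mul, h1, h2, one_mul, Finset.sum_comm]
  have : ∑ j, ∑ i, v j * M j i = 1 / 2 := by
    simpa [Finset.mul_sum] using h3
  rw [this]; norm_num

/-- First family of second-order conditions for the adjoint scheme
(proof of Proposition 3.1): if the IMEX scheme satisfies the second-order
conditions, then `Σ ω̃_i γ_i = Σ ω̃_i γ̃_i = Σ ω_i δ_i = Σ ω_i δ̃_i = 1/2`,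
where `γ_i = Σ_j α_{ij}`, `γ̃_i = Σ_j α̃_{ij}`, `δ_i = Σ_j β_{ij}`, `δ̃_i = Σ_j β̃_{ij}`. -/
theorem adjoint_second_order_first_family
    (s : ℕ) (hs : 1 ≤ s)
    (At A : Matrix (Fin s) (Fin s) ℝ) (wt w : Fin s → ℝ)
    (hwt : ∀ i, wt i ≠ 0) (hw : ∀ i, w i ≠ 0)
    (h1 : ∑ i, wt i = 1) (h2 : ∑ i, w i = 1)
    (h3 : ∑ j, wt j * (∑ k, At j k) = 1 / 2)
    (h4 : ∑ j, wt j * (∑ k, A j k) = 1 / 2)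
    (h5 : ∑ j, w j * (∑ k, At j k) = 1 / 2)
    (h6 : ∑ j, w j * (∑ k, A j k) = 1 / 2) :
    (∑ i, wt i * (∑ j, (w j - w j / wt i * At j i)) = 1 / 2)
    ∧ (∑ i, wt i * (∑ j, (wt j - wt j / wt i * At j i)) = 1 / 2)
    ∧ (∑ i, w i * (∑ j, (w j - w j / w i * A j i)) = 1 / 2)
    ∧ (∑ i, w i * (∑ j, (wt j - wt j / w i * A j i)) = 1 / 2) := by
  exact ⟨aux_adjoint s At wt w hwt h1 h2 h5,
         aux_adjoint s At wt wt hwt h1 h1 h3,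
         aux_adjoint s A w w hw h2 h2 h6,
         aux_adjoint s A w wt hw h2 h1 h4⟩
end

section
/- Let s ≥ 1, let Ã = (ã_{ij}) and A = (a_{ij}) be real s×s matrices and ω̃ = (ω̃_i), ω = (ω_i) real vectors with ω̃_i ≠ 0 and ω_i ≠ 0 for all i. Assume Σ_i ω̃_i = 1 and Σ_i ω_i = 1 and the coupling conditions (2ordercond): Σ_i (ω_i/ω̃_i) d_i = 1/2, Σ_i (ω_i/ω̃_i) d̃_i = 1/2, Σ_i (ω̃_i/ω_i) e_i = 1/2 and Σ_i (ω̃_i/ω_i) ẽ_i = 1/2. Then the adjoint coefficients satisfy Σ_i ω_i γ_i = 1/2, Σ_i ω_i γ̃_i = 1/2, Σ_i ω̃_i δ_i = 1/2 and Σ_i ω̃_i δ̃_i = 1/2. -/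
open Matrix BigOperators Finset

lemma adjoint_helper {s : ℕ} (B : Matrix (Fin s) (Fin s) ℝ) (u p v : Fin s → ℝ)
    (hu : ∑ i, u i = 1) (hv : ∑ i, v i = 1)
    (hc : ∑ i, u i / p i * (∑ k, v k * B k i) = 1 / 2) :
    ∑ i, u i * (∑ j, (v j - v j / p i * B j i)) = 1 / 2 := by
  have key : ∀ i : Fin s, u i * (∑ j, (v j - v j / p i * B j i))
      = u i - u i / p i * (∑ k, v k * B k i) := by
    intro i
    rw [Finset.sum_sub_distrib, mul_sub, hv, mul_one, Finset.mul_sum, Finset.mul_sum]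
    congr 1
    exact Finset.sum_congr rfl fun j _ => by ring
  rw [Finset.sum_congr rfl fun i _ => key i, Finset.sum_sub_distrib, hu, hc]
  norm_num

/-- Second family of second-order conditions for the adjoint scheme
(proof of Proposition 3.1): under the coupling conditions (2ordercond),
`Σ ω_i γ_i = Σ ω_i γ̃_i = Σ ω̃_i δ_i = Σ ω̃_i δ̃_i = 1/2`. Here
`d_i = Σ_k ω_k ã_{ki}`, `d̃_i = Σ_k ω̃_k ã_{ki}`, `e_i = Σ_k ω_k a_{ki}`,
`ẽ_i = Σ_k ω̃_k a_{ki}`. -/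
theorem adjoint_second_order_second_family
    (s : ℕ) (hs : 1 ≤ s)
    (At A : Matrix (Fin s) (Fin s) ℝ) (wt w : Fin s → ℝ)
    (hwt : ∀ i, wt i ≠ 0) (hw : ∀ i, w i ≠ 0)
    (h1 : ∑ i, wt i = 1) (h2 : ∑ i, w i = 1)
    (hd : ∑ i, w i / wt i * (∑ k, w k * At k i) = 1 / 2)
    (hdt : ∑ i, w i / wt i * (∑ k, wt k * At k i) = 1 / 2)
    (he : ∑ i, wt i / w i * (∑ k, w k * A k i) = 1 / 2)
    (het : ∑ i, wt i / w i * (∑ k, wt k * A k i) = 1 / 2) :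
    (∑ i, w i * (∑ j, (w j - w j / wt i * At j i)) = 1 / 2)
    ∧ (∑ i, w i * (∑ j, (wt j - wt j / wt i * At j i)) = 1 / 2)
    ∧ (∑ i, wt i * (∑ j, (w j - w j / w i * A j i)) = 1 / 2)
    ∧ (∑ i, wt i * (∑ j, (wt j - wt j / w i * A j i)) = 1 / 2) := by
  exact ⟨adjoint_helper At w wt w h2 h2 hd,
         adjoint_helper At w wt wt h2 h1 hdt,
         adjoint_helper A wt w w h1 h2 he,
         adjoint_helper A wt w wt h1 h1 het⟩
end

section
/- Let s ≥ 1, let Ã = (ã_{ij}) and A = (a_{ij}) be real s×s matrices and ω = (ω_i) a real vector with ω_i ≠ 0 for all i, and set ω̃ = ω, so that the tilde versions coincide: α̃_{ij} = α_{ij} = ω_j − (ω_j/ω_i) ã_{ji}, β̃_{ij} = β_{ij} = ω_j − (ω_j/ω_i) a_{ji}, with γ_i = Σ_j α_{ij} and δ_i = Σ_j β_{ij}. Assume Σ_i ω_i = 1, Σ_j ω_j c̃_j = 1/2, Σ_j ω_j c_j = 1/2, and the additional third-order conditions (3ordercond): Σ_i d_i²/ω_i = 1/3, Σ_i e_i²/ω_i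 = 1/3 and Σ_i d_i e_i/ω_i = 1/3. Then Σ_i ω_i γ_i² = 1/3, Σ_i ω_i δ_i² = 1/3 and Σ_i ω_i γ_i δ_i = 1/3. -/
open Matrix BigOperators Finset

/-- Third-order conditions `Σ ω_i γ_i² = Σ ω_i δ_i² = Σ ω_i γ_i δ_i = 1/3` for the
adjoint scheme (proof of Theorem 3.1), for `ω̃ = ω`, under the extra conditions
(3ordercond). Here `γ_i = Σ_j (ω_j − (ω_j/ω_i) ã_{ji})`, `δ_i = Σ_j (ω_j − (ω_j/ω_i) a_{ji})`,
`d_i = Σ_k ω_k ã_{ki}` and `e_i = Σ_k ω_k a_{ki}`. -/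
theorem adjoint_third_order_squares
    (s : ℕ) (hs : 1 ≤ s)
    (At A : Matrix (Fin s) (Fin s) ℝ) (w : Fin s → ℝ)
    (hw : ∀ i, w i ≠ 0)
    (h1 : ∑ i, w i = 1)
    (h2 : ∑ j, w j * (∑ k, At j k) = 1 / 2)
    (h3 : ∑ j, w j * (∑ k, A j k) = 1 / 2)
    (hd2 : ∑ i, (∑ k, w k * At k i) ^ 2 / w i = 1 / 3)
    (he2 : ∑ i, (∑ k, w k * A k i) ^ 2 / w i = 1 / 3)
    (hde : ∑ i, (∑ k, w k * At k i) * (∑ k, w k * A k i) / w i = 1 / 3) :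
    (∑ i, w i * (∑ j, (w j - w j / w i * At j i)) ^ 2 = 1 / 3)
    ∧ (∑ i, w i * (∑ j, (w j - w j / w i * A j i)) ^ 2 = 1 / 3)
    ∧ (∑ i, w i * (∑ j, (w j - w j / w i * At j i))
          * (∑ j, (w j - w j / w i * A j i)) = 1 / 3) := by
  -- abbreviations
  set d : Fin s → ℝ := fun i => ∑ k, w k * At k i with hdef
  set e : Fin s → ℝ := fun i => ∑ k, w k * A k i with hedef
  -- the inner sums equal 1 - d i / w i  (resp. with e)
  have key : ∀ (M : Matrix (Fin s) (Fin s) ℝ) (i : Fin s),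
      (∑ j, (w j - w j / w i * M j i)) = 1 - (∑ k, w k * M k i) / w i := by
    intro M i
    rw [Finset.sum_sub_distrib, h1, Finset.sum_div]
    congr 1
    refine Finset.sum_congr rfl fun j _ => ?_
    field_simp
  -- sums of d and e
  have hsumd : ∑ i, d i = 1 / 2 := by
    rw [hdef, Finset.sum_comm, ← h2]
    exact Finset.sum_congr rfl fun k _ => (Finset.mul_sum _ _ _).symm
  have hsume : ∑ i, e i = 1 / 2 := by
    rw [hedef, Finset.sum_comm, ← h3]
    exact Finset.sum_congr rfl fun k _ => (Finset.mul_sum _ _ _).symm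
  refine ⟨?_, ?_, ?_⟩
  · have : ∀ i, w i * (∑ j, (w j - w j / w i * At j i)) ^ 2
        = w i - 2 * d i + d i ^ 2 / w i := by
      intro i
      rw [key At i]
      field_simp [hw i]
      ring
    rw [Finset.sum_congr rfl fun i _ => this i]
    rw [Finset.sum_add_distrib, Finset.sum_sub_distrib, h1, hd2,
      ← Finset.mul_sum, hsumd]
    norm_num
  · have : ∀ i, w i * (∑ j, (w j - w j / w i * A j i)) ^ 2
        = w i - 2 * e i + e i ^ 2 / w i := by
      intro i
      rw [key A i]
      field_simp [hw i]
      ring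
    rw [Finset.sum_congr rfl fun i _ => this i]
    rw [Finset.sum_add_distrib, Finset.sum_sub_distrib, h1, he2,
      ← Finset.mul_sum, hsume]
    norm_num
  · have : ∀ i, w i * (∑ j, (w j - w j / w i * At j i))
        * (∑ j, (w j - w j / w i * A j i))
        = w i - d i - e i + d i * e i / w i := by
      intro i
      rw [key At i, key A i]
      field_simp [hw i]
      ring
    rw [Finset.sum_congr rfl fun i _ => this i]
    rw [Finset.sum_add_distrib, Finset.sum_sub_distrib, Finset.sum_sub_distrib,
      h1, hde, hsumd, hsume]
    norm_num
end

section
/- Let s ≥ 1, let Ã = (ã_{ij}) and A = (a_{ij}) be real s×s matrices and ω = (ω_i) a real vector with ω_i ≠ 0 for all i, and set ω̃ = ω (so α_{ij} = ω_j − (ω_j/ω_i) ã_{ji}, β_{ij} = ω_j − (ω_j/ω_i) a_{ji}, γ_i = Σ_j α_{ij}, δ_i = Σ_j β_{ij}). Assume Σ_i ω_i = 1, Σ_i ω_i c_i = 1/2, Σ_i ω_i c̃_i = 1/2, and the third-order coupling conditions of the IMEX scheme: Σ_{i,j} ω_j ã_{ji} c_i = 1/6, Σ_{i,j} ω_j ã_{ji}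 c̃_i = 1/6, Σ_{i,j} ω_j a_{ji} c_i = 1/6 and Σ_{i,j} ω_j a_{ji} c̃_i = 1/6. Then Σ_i ω_i c_i γ_i = 1/3, Σ_i ω_i c̃_i γ_i = 1/3, Σ_i ω_i c_i δ_i = 1/3 and Σ_i ω_i c̃_i δ_i = 1/3. -/
open Matrix BigOperators Finset

lemma aux_third (s : ℕ) (B : Matrix (Fin s) (Fin s) ℝ) (w c : Fin s → ℝ)
    (hw : ∀ i, w i ≠ 0)
    (h1 : ∑ i, w i = 1)
    (hc : ∑ i, w i * c i = 1 / 2)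
    (hB : ∑ i, ∑ j, w j * B j i * c i = 1 / 6) :
    ∑ i, w i * c i * (∑ j, (w j - w j / w i * B j i)) = 1 / 3 := by
  have key : ∀ i : Fin s, w i * c i * (∑ j, (w j - w j / w i * B j i))
      = w i * c i * (∑ j, w j) - ∑ j, w j * B j i * c i := by
    intro i
    rw [Finset.sum_sub_distrib, mul_sub]
    congr 1
    rw [Finset.mul_sum]
    congr 1
    ext j
    field_simp [hw i]
  calc ∑ i, w i * c i * (∑ j, (w j - w j / w i * B j i))
      = ∑ i, (w i * c i * (∑ j, w j) - ∑ j, w j * B j i * c i) := by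
        exact Finset.sum_congr rfl (fun i _ => key i)
    _ = (∑ i, w i * c i) * (∑ j, w j) - ∑ i, ∑ j, w j * B j i * c i := by
        rw [Finset.sum_sub_distrib, ← Finset.sum_mul]
    _ = 1 / 3 := by rw [h1, hc, hB]; norm_num

/-- Mixed third-order conditions `Σ ω_i c_i γ_i = Σ ω_i c̃_i γ_i = Σ ω_i c_i δ_i
= Σ ω_i c̃_i δ_i = 1/3` for the adjoint scheme (proof of Theorem 3.1), for `ω̃ = ω`,
from the third-order conditions of the forward IMEX scheme. Here `c_i = Σ_j a_{ij}`,
`c̃_i = Σ_j ã_{ij}`, `γ_i = Σ_j (ω_j − (ω_j/ω_i) ã_{ji})`, `δ_i = Σ_j (ω_j − (ω_j/ω_i) a_{ji})`. -/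
theorem adjoint_third_order_mixed
    (s : ℕ) (hs : 1 ≤ s)
    (At A : Matrix (Fin s) (Fin s) ℝ) (w : Fin s → ℝ)
    (hw : ∀ i, w i ≠ 0)
    (h1 : ∑ i, w i = 1)
    (h2 : ∑ i, w i * (∑ k, A i k) = 1 / 2)
    (h3 : ∑ i, w i * (∑ k, At i k) = 1 / 2)
    (h4 : ∑ i, ∑ j, w j * At j i * (∑ k, A i k) = 1 / 6)
    (h5 : ∑ i, ∑ j, w j * At j i * (∑ k, At i k) = 1 / 6)
    (h6 : ∑ i, ∑ j, w j * A j i * (∑ k, A i k) = 1 / 6)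
    (h7 : ∑ i, ∑ j, w j * A j i * (∑ k, At i k) = 1 / 6) :
    (∑ i, w i * (∑ k, A i k) * (∑ j, (w j - w j / w i * At j i)) = 1 / 3)
    ∧ (∑ i, w i * (∑ k, At i k) * (∑ j, (w j - w j / w i * At j i)) = 1 / 3)
    ∧ (∑ i, w i * (∑ k, A i k) * (∑ j, (w j - w j / w i * A j i)) = 1 / 3)
    ∧ (∑ i, w i * (∑ k, At i k) * (∑ j, (w j - w j / w i * A j i)) = 1 / 3) := by
  exact ⟨aux_third s At w (fun i => ∑ k, A i k) hw h1 h2 h4,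
    aux_third s At w (fun i => ∑ k, At i k) hw h1 h3 h5,
    aux_third s A w (fun i => ∑ k, A i k) hw h1 h2 h6,
    aux_third s A w (fun i => ∑ k, At i k) hw h1 h3 h7⟩
end

section
/- Let s ≥ 1, let Ã = (ã_{ij}) and A = (a_{ij}) be real s×s matrices and ω = (ω_i) a real vector with ω_i ≠ 0 for all i, and set ω̃ = ω (so α_{ij} = ω_j − (ω_j/ω_i) ã_{ji}, β_{ij} = ω_j − (ω_j/ω_i) a_{ji}, γ_i = Σ_j α_{ij}, δ_i = Σ_j β_{ij}). Assume Σ_i ω_i = 1, Σ_j ω_j γ_j = 1/2, Σ_j ω_j δ_j = 1/2, and Σ_j ω_j c_j γ_j = 1/3, Σ_j ω_j c̃_j γ_j = 1/3, Σ_j ω_j c_j δ_j = 1/3, Σ_j ω_j c̃_j δ_j = 1/3. Then Σ_{i,j} ω_i β_{ij} γ_j = 1/6, Σ_{i,j} ω_i β_{ij} δ_j = 1/6, Σ_{i,j} ω_i α_{ij} γ_j = 1/6 and Σ_{i,j} ω_i α_{ij} δ_j = 1/6. -/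
open Matrix BigOperators Finset

lemma adjoint_sum_rearrange {s : ℕ} (M : Matrix (Fin s) (Fin s) ℝ)
    (w g : Fin s → ℝ) (hw : ∀ i, w i ≠ 0) :
    ∑ i, ∑ j, w i * (w j - w j / w i * M j i) * g j
      = (∑ i, w i) * (∑ j, w j * g j) - ∑ j, w j * (∑ i, M j i) * g j := by
  have key : ∀ i j : Fin s, w i * (w j - w j / w i * M j i) * g j
      = w i * (w j * g j) - w j * M j i * g j := by
    intro i j
    field_simp [hw i]
  simp only [key, Finset.sum_sub_distrib]
  congr 1
  · rw [Finset.sum_mul_sum]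
  · rw [Finset.sum_comm]
    refine Finset.sum_congr rfl fun j _ => ?_
    simp only [Finset.sum_mul, Finset.mul_sum]


/-- Third-order conditions `Σ_{i,j} ω_i β_{ij} γ_j = Σ_{i,j} ω_i β_{ij} δ_j
= Σ_{i,j} ω_i α_{ij} γ_j = Σ_{i,j} ω_i α_{ij} δ_j = 1/6` for the adjoint scheme
(proof of Theorem 3.1), for `ω̃ = ω`. Here `α_{ij} = ω_j − (ω_j/ω_i) ã_{ji}`,
`β_{ij} = ω_j − (ω_j/ω_i) a_{ji}`, `γ_j = Σ_k α_{jk}`, `δ_j = Σ_k β_{jk}`,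
`c_j = Σ_k a_{jk}`, `c̃_j = Σ_k ã_{jk}`. -/
theorem adjoint_third_order_alpha_beta
    (s : ℕ) (hs : 1 ≤ s)
    (At A : Matrix (Fin s) (Fin s) ℝ) (w : Fin s → ℝ)
    (hw : ∀ i, w i ≠ 0)
    (h1 : ∑ i, w i = 1)
    (h2 : ∑ j, w j * (∑ k, (w k - w k / w j * At k j)) = 1 / 2)
    (h3 : ∑ j, w j * (∑ k, (w k - w k / w j * A k j)) = 1 / 2)
    (h4 : ∑ j, w j * (∑ k, A j k) * (∑ k, (w k - w k / w j * At k j)) = 1 / 3)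
    (h5 : ∑ j, w j * (∑ k, At j k) * (∑ k, (w k - w k / w j * At k j)) = 1 / 3)
    (h6 : ∑ j, w j * (∑ k, A j k) * (∑ k, (w k - w k / w j * A k j)) = 1 / 3)
    (h7 : ∑ j, w j * (∑ k, At j k) * (∑ k, (w k - w k / w j * A k j)) = 1 / 3) :
    (∑ i, ∑ j, w i * (w j - w j / w i * A j i)
        * (∑ k, (w k - w k / w j * At k j)) = 1 / 6)
    ∧ (∑ i, ∑ j, w i * (w j - w j / w i * A j i)
        * (∑ k, (w k - w k / w j * A k j)) = 1 / 6)
    ∧ (∑ i, ∑ j, w i * (w j - w j / w i * At j i)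
        * (∑ k, (w k - w k / w j * At k j)) = 1 / 6)
    ∧ (∑ i, ∑ j, w i * (w j - w j / w i * At j i)
        * (∑ k, (w k - w k / w j * A k j)) = 1 / 6) := by
  refine ⟨?_, ?_, ?_, ?_⟩
  · rw [adjoint_sum_rearrange A w _ hw, h1, h2, h4]; norm_num
  · rw [adjoint_sum_rearrange A w _ hw, h1, h3, h6]; norm_num
  · rw [adjoint_sum_rearrange At w _ hw, h1, h2, h5]; norm_num
  · rw [adjoint_sum_rearrange At w _ hw, h1, h3, h7]; norm_num
end

section
/- Let s ≥ 1, let Ã = (ã_{ij}) and A = (a_{ij}) be real s×s matrices and ω = (ω_i) a real vector with ω_i ≠ 0 for all i, and set ω̃ = ω (so α_{ij} = ω_j − (ω_j/ω_i) ã_{ji} and β_{ij} = ω_j − (ω_j/ω_i) a_{ji}). Assume Σ_i ω_i = 1, Σ_j ω_j c_j = 1/2, Σ_j ω_j c̃_j = 1/2, and the third-order conditions Σ_j ω_j c_j² = 1/3, Σ_j ω_j c_j c̃_j = 1/3 and Σ_j ω_j c̃_j² = 1/3. Then the coupling conditions Σ_{i,j} ω_i β_{ij} c_j = 1/6, Σ_{i,j}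 ω_i β_{ij} c̃_j = 1/6, Σ_{i,j} ω_i α_{ij} c_j = 1/6 and Σ_{i,j} ω_i α_{ij} c̃_j = 1/6 hold. -/
open Matrix BigOperators Finset

/-- Third-order coupling conditions `Σ_{i,j} ω_i β_{ij} c_j = Σ_{i,j} ω_i β_{ij} c̃_j
= Σ_{i,j} ω_i α_{ij} c_j = Σ_{i,j} ω_i α_{ij} c̃_j = 1/6` between adjoint and forward
coefficients (proof of Theorem 3.1), for `ω̃ = ω`. Here `α_{ij} = ω_j − (ω_j/ω_i) ã_{ji}`,
`β_{ij} = ω_j − (ω_j/ω_i) a_{ji}`, `c_j = Σ_k a_{jk}`, `c̃_j = Σ_k ã_{jk}`. -/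
theorem adjoint_third_order_coupling_c
    (s : ℕ) (hs : 1 ≤ s)
    (At A : Matrix (Fin s) (Fin s) ℝ) (w : Fin s → ℝ)
    (hw : ∀ i, w i ≠ 0)
    (h1 : ∑ i, w i = 1)
    (h2 : ∑ j, w j * (∑ k, A j k) = 1 / 2)
    (h3 : ∑ j, w j * (∑ k, At j k) = 1 / 2)
    (h4 : ∑ j, w j * (∑ k, A j k) ^ 2 = 1 / 3)
    (h5 : ∑ j, w j * (∑ k, A j k) * (∑ k, At j k) = 1 / 3)
    (h6 : ∑ j, w j * (∑ k, At j k) ^ 2 = 1 / 3) :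
    (∑ i, ∑ j, w i * (w j - w j / w i * A j i) * (∑ k, A j k) = 1 / 6)
    ∧ (∑ i, ∑ j, w i * (w j - w j / w i * A j i) * (∑ k, At j k) = 1 / 6)
    ∧ (∑ i, ∑ j, w i * (w j - w j / w i * At j i) * (∑ k, A j k) = 1 / 6)
    ∧ (∑ i, ∑ j, w i * (w j - w j / w i * At j i) * (∑ k, At j k) = 1 / 6) := by
  have key : ∀ (B : Matrix (Fin s) (Fin s) ℝ) (d : Fin s → ℝ),
      ∑ i, ∑ j, w i * (w j - w j / w i * B j i) * d j
        = (∑ j, w j * d j) - ∑ j, w j * (∑ i, B j i) * d j := by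
    intro B d
    have step : ∀ i j : Fin s, w i * (w j - w j / w i * B j i) * d j
        = w i * (w j * d j) - w j * B j i * d j := by
      intro i j
      have h : w j / w i * w i = w j := div_mul_cancel₀ _ (hw i)
      calc w i * (w j - w j / w i * B j i) * d j
          = w i * (w j * d j) - (w j / w i * w i) * B j i * d j := by ring
        _ = w i * (w j * d j) - w j * B j i * d j := by rw [h]
    calc ∑ i, ∑ j, w i * (w j - w j / w i * B j i) * d j
        = ∑ i, ∑ j, (w i * (w j * d j) - w j * B j i * d j) := by
          exact Finset.sum_congr rfl fun i _ => Finset.sum_congr rfl fun j _ => step i j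
      _ = ∑ i, (w i * ∑ j, w j * d j - ∑ j, w j * B j i * d j) := by
          refine Finset.sum_congr rfl fun i _ => ?_
          rw [Finset.sum_sub_distrib, ← Finset.mul_sum]
      _ = (∑ i, w i) * (∑ j, w j * d j) - ∑ i, ∑ j, w j * B j i * d j := by
          rw [Finset.sum_sub_distrib, Finset.sum_mul]
      _ = (∑ j, w j * d j) - ∑ j, w j * (∑ i, B j i) * d j := by
          rw [h1, one_mul, Finset.sum_comm]
          congr 1
          refine Finset.sum_congr rfl fun j _ => ?_
          rw [Finset.mul_sum, Finset.sum_mul]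
  have e1 : ∑ j, w j * (∑ i, A j i) * (∑ k, A j k) = 1/3 := by
    rw [← h4]; exact Finset.sum_congr rfl fun j _ => by ring
  have e2 : ∑ j, w j * (∑ i, A j i) * (∑ k, At j k) = 1/3 := h5
  have e3 : ∑ j, w j * (∑ i, At j i) * (∑ k, A j k) = 1/3 := by
    rw [← h5]; exact Finset.sum_congr rfl fun j _ => by ring
  have e4 : ∑ j, w j * (∑ i, At j i) * (∑ k, At j k) = 1/3 := by
    rw [← h6]; exact Finset.sum_congr rfl fun j _ => by ring
  refine ⟨?_, ?_, ?_, ?_⟩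
  · rw [key A fun j => ∑ k, A j k, h2, e1]; norm_num
  · rw [key A fun j => ∑ k, At j k, h3, e2]; norm_num
  · rw [key At fun j => ∑ k, A j k, h2, e3]; norm_num
  · rw [key At fun j => ∑ k, At j k, h3, e4]; norm_num
end

section
/- Let s ≥ 1, let Ã = (ã_{ij}) and A = (a_{ij}) be real s×s matrices and ω = (ω_i) a real vector with ω_i ≠ 0 for all i, and set ω̃ = ω (so α_{ij} = ω_j − (ω_j/ω_i) ã_{ji}, β_{ij} = ω_j − (ω_j/ω_i) a_{ji}, γ_i = Σ_j α_{ij}, δ_i = Σ_j β_{ij}). Assume Σ_i ω_i = 1, Σ_i ω_i c_i = 1/2, Σ_i ω_i c̃_i = 1/2, and the additional third-order conditions (3ordercond): Σ_j d_j²/ω_j = 1/3, Σ_j e_j²/ω_j = 1/3 and Σ_j d_j e_j/ω_j = 1/3. Then Σ_{i,j} ω_i a_{ij} γ_j = 1/6, Σ_{i,j} ω_i a_{ij} δ_j = 1/6, Σ_{i,j} ω_i ã_{ij} γ_j = 1/6 and Σ_{i,j} ω_i ã_{ij} δ_j = 1/6. -/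
open Matrix BigOperators Finset

lemma aux_coupling (s : ℕ) (B C : Matrix (Fin s) (Fin s) ℝ) (w : Fin s → ℝ)
    (h1 : ∑ i, w i = 1)
    (hB : ∑ i, w i * (∑ k, B i k) = 1 / 2)
    (hBC : ∑ j, (∑ i, w i * C i j) * (∑ i, w i * B i j) / w j = 1 / 3) :
    ∑ i, ∑ j, w i * B i j * (∑ k, (w k - w k / w j * C k j)) = 1 / 6 := by
  have hswap : ∑ i, ∑ j, w i * B i j * (∑ k, (w k - w k / w j * C k j))
      = ∑ j, (∑ i, w i * B i j) * (∑ k, (w k - w k / w j * C k j)) := by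
    rw [Finset.sum_comm]
    exact Finset.sum_congr rfl fun j _ => (Finset.sum_mul _ _ _).symm
  have hb : ∑ j, (∑ i, w i * B i j) = 1 / 2 := by
    rw [Finset.sum_comm]
    simpa [Finset.mul_sum] using hB
  have hG : ∀ j, (∑ k, (w k - w k / w j * C k j))
      = 1 - (∑ k, w k * C k j) / w j := by
    intro j
    rw [Finset.sum_sub_distrib, h1, Finset.sum_div]
    congr 1
    exact Finset.sum_congr rfl fun k _ => by ring
  rw [hswap]
  calc ∑ j, (∑ i, w i * B i j) * (∑ k, (w k - w k / w j * C k j))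
      = ∑ j, ((∑ i, w i * B i j)
          - (∑ i, w i * C i j) * (∑ i, w i * B i j) / w j) := by
        refine Finset.sum_congr rfl fun j _ => ?_
        rw [hG]
        ring
    _ = 1 / 2 - 1 / 3 := by rw [Finset.sum_sub_distrib, hb, hBC]
    _ = 1 / 6 := by norm_num

/-- Second set of third-order coupling conditions `Σ_{i,j} ω_i a_{ij} γ_j
= Σ_{i,j} ω_i a_{ij} δ_j = Σ_{i,j} ω_i ã_{ij} γ_j = Σ_{i,j} ω_i ã_{ij} δ_j = 1/6`
(proof of Theorem 3.1), for `ω̃ = ω`, using the conditions (3ordercond). Here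
`γ_j = Σ_k (ω_k − (ω_k/ω_j) ã_{kj})`, `δ_j = Σ_k (ω_k − (ω_k/ω_j) a_{kj})`,
`d_j = Σ_i ω_i ã_{ij}`, `e_j = Σ_i ω_i a_{ij}`. -/
theorem adjoint_third_order_coupling_a
    (s : ℕ) (hs : 1 ≤ s)
    (At A : Matrix (Fin s) (Fin s) ℝ) (w : Fin s → ℝ)
    (hw : ∀ i, w i ≠ 0)
    (h1 : ∑ i, w i = 1)
    (h2 : ∑ i, w i * (∑ k, A i k) = 1 / 2)
    (h3 : ∑ i, w i * (∑ k, At i k) = 1 / 2)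
    (hd2 : ∑ j, (∑ i, w i * At i j) ^ 2 / w j = 1 / 3)
    (he2 : ∑ j, (∑ i, w i * A i j) ^ 2 / w j = 1 / 3)
    (hde : ∑ j, (∑ i, w i * At i j) * (∑ i, w i * A i j) / w j = 1 / 3) :
    (∑ i, ∑ j, w i * A i j * (∑ k, (w k - w k / w j * At k j)) = 1 / 6)
    ∧ (∑ i, ∑ j, w i * A i j * (∑ k, (w k - w k / w j * A k j)) = 1 / 6)
    ∧ (∑ i, ∑ j, w i * At i j * (∑ k, (w k - w k / w j * At k j)) = 1 / 6)
    ∧ (∑ i, ∑ j, w i * At i j * (∑ k, (w k - w k / w j * A k j)) = 1 / 6) := by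
  have hed : ∑ j, (∑ i, w i * A i j) * (∑ i, w i * At i j) / w j = 1 / 3 := by
    rw [← hde]; exact Finset.sum_congr rfl fun j _ => by ring
  refine ⟨aux_coupling s A At w h1 h2 hde,
    aux_coupling s A A w h1 h2 (by simpa [sq] using he2),
    aux_coupling s At At w h1 h3 (by simpa [sq] using hd2),
    aux_coupling s At A w h1 h3 hed⟩
end

section
/- Let s ≥ 1, K ≥ 1, h ∈ ℝ. Let Ã = (ã_{ij}) and A = (a_{ij}) be real s×s matrices and ω = (ω_i) a real vector with ω_i ≠ 0 for all i; set ω̃ = ω and define α_{ij} = ω_j − (ω_j/ω_i) ã_{ji} and β_{ij} = ω_j − (ω_j/ω_i) a_{ji}. For linear maps a, b : ℝ^{2K} → ℝ^K define (a ∧ b)(u,v) := ⟨a(u), b(v)⟩ − ⟨a(v), b(u)⟩. For each i = 1,…,s let F_i, G_i be real K×K matrices, let S_i, R_i be symmetric real K×K matrices, and let dy0, dp0, dY_i, dP̃_i, dP_i : ℝ^{2K} → ℝ^K be linear maps. Define dT_i := F_i ∘ dY_i, dL_i := G_i ∘ dY_i, dQ_i := S_i ∘ dY_i + F_i^T ∘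 dP̃_i, dV_i := R_i ∘ dY_i + G_i^T ∘ dP_i, and assume the variational equations: dY_i = dy0 + h Σ_{j=1}^s ã_{ij} dT_j + h Σ_{j=1}^s a_{ij} dL_j, dP̃_i = dp0 − h Σ_{j=1}^s α_{ij} (dQ_j + dV_j), dP_i = dp0 − h Σ_{j=1}^s β_{ij} (dQ_j + dV_j) for all i. Define dy1 := dy0 + h Σ_{i=1}^s ω_i (dT_i + dL_i) and dp1 := dp0 − h Σ_{i=1}^s ω_i (dQ_i + dV_i). Then dy1 ∧ dp1 = dy0 ∧ dp0 as bilinear forms on ℝ^{2K} × ℝ^{2K}. -/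
open Matrix BigOperators Finset

/-- The wedge of two maps `a, b : ℝ^{2K} → ℝ^K`:
`(a ∧ b)(u,v) = ⟨a(u), b(v)⟩ − ⟨a(v), b(u)⟩`. -/
def wedge {K : ℕ} (a b : (Fin (2 * K) → ℝ) →ₗ[ℝ] (Fin K → ℝ))
    (u v : Fin (2 * K) → ℝ) : ℝ :=
  a u ⬝ᵥ b v - a v ⬝ᵥ b u

/-!
Write `B` for the bilinear form `(a, b) ↦ (a ∧ b)(u, v)` at fixed `u, v` and `C_i = dQ_i + dV_i`.
Expanding `B(dy1, dp1)` and eliminating `dp0` through the adjoint stage equations and `dy0`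
through the state stage equations leaves, besides `B(dy0, dp0)`, the stage terms
`B(dY_i, C_i) - B(dT_i, dP̃_i) - B(dL_i, dP_i)`, which vanish because `S_i, R_i` are symmetric,
and `h²` times double sums whose coefficients cancel exactly when
`ω_i α_ij + ω_j ã_ji = ω_i ω_j` and `ω_i β_ij + ω_j a_ji = ω_i ω_j`: the classical
symplecticity condition of partitioned Runge–Kutta methods, which the adjoint coefficients
satisfy by construction.
-/

theorem mul_sub_div_mul_add_mul {K : Type*} [Field K] {a b c : K} (ha : a ≠ 0) :
    a * (b - b / a * c) + b * c = a * b := by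
  field_simp
  ring

theorem sum_mul_sum_add_sum_mul_sum_transpose {R ι : Type*} [CommRing R] [Fintype ι]
    (w : ι → R) (a c : Matrix ι ι R) (t : ι → ι → R)
    (hc : ∀ i j, w i * c i j + w j * a j i = w i * w j) :
    ∑ i, w i * ∑ j, c i j * t i j + ∑ i, w i * ∑ j, a i j * t j i
      = ∑ i, w i * ∑ j, w j * t j i := by
  simp only [mul_sum]
  rw [sum_comm (f := fun i j => w i * (c i j * t i j)), ← sum_add_distrib]
  refine sum_congr rfl fun i _ => ?_
  rw [← sum_add_distrib]
  exact sum_congr rfl fun j _ => by linear_combination t j i * hc j i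

section PartitionedRungeKutta

variable {R M N ι : Type*} [CommRing R] [AddCommGroup M] [Module R M] [AddCommGroup N]
  [Module R N] [Fintype ι]

theorem LinearMap.apply_partitionedRK_step_eq (B : M →ₗ[R] N →ₗ[R] R) (h : R) (w : ι → R)
    (At A α β : Matrix ι ι R)
    (hα : ∀ i j, w i * α i j + w j * At j i = w i * w j)
    (hβ : ∀ i j, w i * β i j + w j * A j i = w i * w j)
    (y0 : M) (p0 : N) (Y T L : ι → M) (Pt P C : ι → N)
    (hY : ∀ i, Y i = y0 + h • ∑ j, At i j • T j + h • ∑ j, A i j • L j)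
    (hPt : ∀ i, Pt i = p0 - h • ∑ j, α i j • C j)
    (hP : ∀ i, P i = p0 - h • ∑ j, β i j • C j)
    (hC : ∀ i, B (Y i) (C i) = B (T i) (Pt i) + B (L i) (P i)) :
    B (y0 + h • ∑ i, w i • (T i + L i)) (p0 - h • ∑ i, w i • C i) = B y0 p0 := by
  have hT : ∀ i, B (T i) p0 = B (T i) (Pt i) + h * ∑ j, α i j * B (T i) (C j) := by
    intro i
    simp only [hPt i, map_sub, map_smul, map_sum, smul_eq_mul]
    ring
  have hL : ∀ i, B (L i) p0 = B (L i) (P i) + h * ∑ j, β i j * B (L i) (C j) := by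
    intro i
    simp only [hP i, map_sub, map_smul, map_sum, smul_eq_mul]
    ring
  have hy0 : ∀ i, B y0 (C i) = B (Y i) (C i) - h * ∑ j, At i j * B (T j) (C i)
      - h * ∑ j, A i j * B (L j) (C i) := by
    intro i
    simp only [hY i, map_add, map_smul, map_sum, LinearMap.add_apply, LinearMap.smul_apply,
      LinearMap.sum_apply, smul_eq_mul]
    ring
  have hstage : ∀ i, w i * (B (T i) p0 + B (L i) p0)
      - w i * (B y0 (C i) + h * ∑ j, w j * (B (T j) (C i) + B (L j) (C i)))
      = h * (w i * ∑ j, α i j * B (T i) (C j) + w i * ∑ j, At i j * B (T j) (C i)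
          - w i * ∑ j, w j * B (T j) (C i))
        + h * (w i * ∑ j, β i j * B (L i) (C j) + w i * ∑ j, A i j * B (L j) (C i)
          - w i * ∑ j, w j * B (L j) (C i)) := by
    intro i
    rw [hT, hL, hy0, hC]
    simp only [mul_add, sum_add_distrib]
    ring
  have hsum := sum_congr rfl fun i (_ : i ∈ univ) => hstage i
  simp only [sum_sub_distrib, sum_add_distrib, ← mul_sum,
    sum_mul_sum_add_sum_mul_sum_transpose w At α _ hα,
    sum_mul_sum_add_sum_mul_sum_transpose w A β _ hβ, sub_self, mul_zero, add_zero] at hsum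
  simp only [map_add, map_sub, map_smul, map_sum, LinearMap.add_apply,
    LinearMap.smul_apply, LinearMap.sum_apply, smul_eq_mul]
  linear_combination h * hsum

end PartitionedRungeKutta

section WedgeForm

variable {R M ι : Type*} [CommRing R] [AddCommGroup M] [Module R M] [Fintype ι]

def wedgeForm (u v : M) : (M →ₗ[R] ι → R) →ₗ[R] (M →ₗ[R] ι → R) →ₗ[R] R :=
  LinearMap.mk₂ R (fun a b => a u ⬝ᵥ b v - a v ⬝ᵥ b u)
    (fun _ _ _ => by simp only [LinearMap.add_apply, add_dotProduct]; ring)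
    (fun _ _ _ => by simp only [LinearMap.smul_apply, smul_dotProduct, smul_eq_mul]; ring)
    (fun _ _ _ => by simp only [LinearMap.add_apply, dotProduct_add]; ring)
    (fun _ _ _ => by simp only [LinearMap.smul_apply, dotProduct_smul, smul_eq_mul]; ring)

@[simp]
theorem wedgeForm_apply (u v : M) (a b : M →ₗ[R] ι → R) :
    wedgeForm u v a b = a u ⬝ᵥ b v - a v ⬝ᵥ b u :=
  rfl

theorem wedgeForm_mulVecLin_comp_left (u v : M) (X : Matrix ι ι R) (a b : M →ₗ[R] ι → R) :
    wedgeForm u v (X.mulVecLin ∘ₗ a) b = wedgeForm u v a (Xᵀ.mulVecLin ∘ₗ b) := by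
  simp only [wedgeForm_apply, LinearMap.comp_apply, mulVecLin_apply, dotProduct_transpose_mulVec]
  rw [dotProduct_comm (X *ᵥ a u), dotProduct_comm (X *ᵥ a v)]

theorem wedgeForm_mulVecLin_comp_self {S : Matrix ι ι R} (hS : S.IsSymm) (u v : M)
    (a : M →ₗ[R] ι → R) : wedgeForm u v a (S.mulVecLin ∘ₗ a) = 0 := by
  simp only [wedgeForm_apply, LinearMap.comp_apply, mulVecLin_apply]
  rw [dotProduct_mulVec, ← mulVec_transpose, hS.eq, dotProduct_comm, sub_self]

end WedgeForm

theorem imex_symplectic_general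
    (s K : ℕ) (h : ℝ)
    (At A : Matrix (Fin s) (Fin s) ℝ) (w : Fin s → ℝ) (hw : ∀ i, w i ≠ 0)
    (F G S R : Fin s → Matrix (Fin K) (Fin K) ℝ)
    (hS : ∀ i, (S i).IsSymm) (hR : ∀ i, (R i).IsSymm)
    (dy0 dp0 : (Fin (2 * K) → ℝ) →ₗ[ℝ] (Fin K → ℝ))
    (dY dPt dP : Fin s → ((Fin (2 * K) → ℝ) →ₗ[ℝ] (Fin K → ℝ)))
    (dT dL dQ dV : Fin s → ((Fin (2 * K) → ℝ) →ₗ[ℝ] (Fin K → ℝ)))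
    (hT : ∀ i, dT i = (F i).mulVecLin ∘ₗ dY i)
    (hL : ∀ i, dL i = (G i).mulVecLin ∘ₗ dY i)
    (hQ : ∀ i, dQ i = (S i).mulVecLin ∘ₗ dY i + (F i)ᵀ.mulVecLin ∘ₗ dPt i)
    (hV : ∀ i, dV i = (R i).mulVecLin ∘ₗ dY i + (G i)ᵀ.mulVecLin ∘ₗ dP i)
    (hY : ∀ i, dY i = dy0 + h • ∑ j, At i j • dT j + h • ∑ j, A i j • dL j)
    (hPt : ∀ i, dPt i
      = dp0 - h • ∑ j, (w j - w j / w i * At j i) • (dQ j + dV j))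
    (hP : ∀ i, dP i
      = dp0 - h • ∑ j, (w j - w j / w i * A j i) • (dQ j + dV j))
    (dy1 dp1 : (Fin (2 * K) → ℝ) →ₗ[ℝ] (Fin K → ℝ))
    (hy1 : dy1 = dy0 + h • ∑ i, w i • (dT i + dL i))
    (hp1 : dp1 = dp0 - h • ∑ i, w i • (dQ i + dV i)) :
    ∀ u v : Fin (2 * K) → ℝ, wedge dy1 dp1 u v = wedge dy0 dp0 u v := by
  intro u v
  have hstage : ∀ i, wedgeForm u v (dY i) (dQ i + dV i)
      = wedgeForm u v (dT i) (dPt i) + wedgeForm u v (dL i) (dP i) := by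
    intro i
    rw [hQ, hV, hT, hL, wedgeForm_mulVecLin_comp_left, wedgeForm_mulVecLin_comp_left, map_add,
      map_add, map_add, wedgeForm_mulVecLin_comp_self (hS i),
      wedgeForm_mulVecLin_comp_self (hR i), zero_add, zero_add]
  change wedgeForm u v dy1 dp1 = wedgeForm u v dy0 dp0
  rw [hy1, hp1]
  exact (wedgeForm u v).apply_partitionedRK_step_eq h w At A _ _
    (fun i j => mul_sub_div_mul_add_mul (hw i)) (fun i j => mul_sub_div_mul_add_mul (hw i))
    dy0 dp0 dY dT dL dPt dP _ hY hPt hP hstage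

/-- Linearized form of Theorem 3.2 (symplecticity): with `ω̃ = ω`, `ω_i ≠ 0`,
adjoint coefficients `α_{ij} = ω_j − (ω_j/ω_i) ã_{ji}`, `β_{ij} = ω_j − (ω_j/ω_i) a_{ji}`,
and the variational equations of (SRK-1)/(ARK-2), the scheme preserves the symplectic
two-form over one step: `dy1 ∧ dp1 = dy0 ∧ dp0`. -/
theorem imex_symplectic
    (s K : ℕ) (hs : 1 ≤ s) (hK : 1 ≤ K) (h : ℝ)
    (At A : Matrix (Fin s) (Fin s) ℝ) (w : Fin s → ℝ) (hw : ∀ i, w i ≠ 0)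
    (F G S R : Fin s → Matrix (Fin K) (Fin K) ℝ)
    (hS : ∀ i, (S i).IsSymm) (hR : ∀ i, (R i).IsSymm)
    (dy0 dp0 : (Fin (2 * K) → ℝ) →ₗ[ℝ] (Fin K → ℝ))
    (dY dPt dP : Fin s → ((Fin (2 * K) → ℝ) →ₗ[ℝ] (Fin K → ℝ)))
    (dT dL dQ dV : Fin s → ((Fin (2 * K) → ℝ) →ₗ[ℝ] (Fin K → ℝ)))
    (hT : ∀ i, dT i = (F i).mulVecLin ∘ₗ dY i)
    (hL : ∀ i, dL i = (G i).mulVecLin ∘ₗ dY i)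
    (hQ : ∀ i, dQ i = (S i).mulVecLin ∘ₗ dY i + (F i)ᵀ.mulVecLin ∘ₗ dPt i)
    (hV : ∀ i, dV i = (R i).mulVecLin ∘ₗ dY i + (G i)ᵀ.mulVecLin ∘ₗ dP i)
    (hY : ∀ i, dY i = dy0 + h • ∑ j, At i j • dT j + h • ∑ j, A i j • dL j)
    (hPt : ∀ i, dPt i
      = dp0 - h • ∑ j, (w j - w j / w i * At j i) • (dQ j + dV j))
    (hP : ∀ i, dP i
      = dp0 - h • ∑ j, (w j - w j / w i * A j i) • (dQ j + dV j))
    (dy1 dp1 : (Fin (2 * K) → ℝ) →ₗ[ℝ] (Fin K → ℝ))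
    (hy1 : dy1 = dy0 + h • ∑ i, w i • (dT i + dL i))
    (hp1 : dp1 = dp0 - h • ∑ i, w i • (dQ i + dV i)) :
    ∀ u v : Fin (2 * K) → ℝ, wedge dy1 dp1 u v = wedge dy0 dp0 u v :=
  imex_symplectic_general s K h At A w hw F G S R hS hR dy0 dp0 dY dPt dP dT dL dQ dV hT hL hQ hV hY
    hPt hP dy1 dp1 hy1 hp1
end
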